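/- Let μ be a σ-finite measure on ℝ^{d}, p : ℝ^{d} → [0, ∞) measurable, and ρ : ℝ^{d} → (0, ∞) measurable. Let a < b be real numbers and assume ∫ p(x) (ρ(x)^{a} + ρ(x)^{b}) (1 + |log ρ(x)|) μ(dx) < ∞. Then the normalizing function Z(λ) = ∫ p(x) ρ(x)^{λ} μ(dx) is differentiable on the open interval (a, b) with derivative Z′(λ) = ∫ p(x) ρ(x)^{λ} log ρ(x) μ(dx). -/

import Mathlib

/-!
Since `t ↦ ρ ^ t` is monotone (increasing for `ρ ≥ 1`, decreasing for `ρ ≤ 1`), on `[a, b]`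
it is bounded by `ρ ^ a + ρ ^ b`. Hence the integrable function
`p (ρ ^ a + ρ ^ b) (1 + |log ρ|)` dominates both the integrand `p ρ ^ λ` and its
`λ`-derivative `p ρ ^ λ log ρ` uniformly on `(a, b)`, and one may differentiate under the
integral sign.
-/

open MeasureTheory Real

namespace Real

lemma rpow_le_rpow_add_rpow_of_mem_Icc {r a b t : ℝ} (hr : 0 < r) (ht : t ∈ Set.Icc a b) :
    r ^ t ≤ r ^ a + r ^ b := by
  rcases le_total 1 r with h1 | h1
  · linarith [rpow_le_rpow_of_exponent_le h1 ht.2, rpow_pos_of_pos hr a]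
  · linarith [rpow_le_rpow_of_exponent_ge hr h1 ht.1, rpow_pos_of_pos hr b]

lemma hasDerivAt_const_mul_rpow (c : ℝ) {r : ℝ} (hr : 0 < r) (t : ℝ) :
    HasDerivAt (fun s => c * r ^ s) (c * r ^ t * log r) t := by
  simpa only [mul_assoc] using (hasStrictDerivAt_const_rpow hr t).hasDerivAt.const_mul c

variable {c r a b t : ℝ}

lemma norm_mul_rpow_le (hr : 0 < r) (ht : t ∈ Set.Icc a b) :
    ‖c * r ^ t‖ ≤ ‖c * (r ^ a + r ^ b)‖ := by
  rw [norm_mul, norm_mul, norm_of_nonneg (rpow_pos_of_pos hr t).le,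
    norm_of_nonneg (add_pos (rpow_pos_of_pos hr a) (rpow_pos_of_pos hr b)).le]
  gcongr
  exact rpow_le_rpow_add_rpow_of_mem_Icc hr ht

lemma norm_mul_rpow_mul_log_le (hr : 0 < r) (ht : t ∈ Set.Icc a b) :
    ‖c * r ^ t * log r‖ ≤ ‖c * (r ^ a + r ^ b) * (1 + |log r|)‖ := by
  rw [norm_mul _ (log r), norm_mul _ (1 + |log r|), norm_eq_abs (log r),
    norm_of_nonneg (by positivity : (0 : ℝ) ≤ 1 + |log r|)]
  gcongr
  · exact norm_mul_rpow_le hr ht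
  · linarith

lemma norm_mul_rpow_le_mul_one_add_abs_log (hr : 0 < r) (ht : t ∈ Set.Icc a b) :
    ‖c * r ^ t‖ ≤ ‖c * (r ^ a + r ^ b) * (1 + |log r|)‖ := by
  rw [norm_mul _ (1 + |log r|), norm_of_nonneg (by positivity : (0 : ℝ) ≤ 1 + |log r|)]
  exact (norm_mul_rpow_le hr ht).trans (le_mul_of_one_le_right (norm_nonneg _)
    (le_add_of_nonneg_right (abs_nonneg _)))

end Real

theorem hasDerivAt_homotopy_normalizer_general
    {d : ℕ} (μ : Measure (Fin d → ℝ))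
    (p ρ : (Fin d → ℝ) → ℝ)
    (hpmeas : Measurable p)
    (hρmeas : Measurable ρ) (hρpos : ∀ x, 0 < ρ x)
    (a b : ℝ)
    (hint : Integrable
      (fun x => p x * (ρ x ^ a + ρ x ^ b) * (1 + |Real.log (ρ x)|)) μ) :
    ∀ l ∈ Set.Ioo a b,
      HasDerivAt (fun lam : ℝ => ∫ x, p x * ρ x ^ lam ∂μ)
        (∫ x, p x * ρ x ^ l * Real.log (ρ x) ∂μ) l := by
  intro l hl
  have hmeas : ∀ lam : ℝ, AEStronglyMeasurable (fun x => p x * ρ x ^ lam) μ := fun lam =>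
    (hpmeas.mul (hρmeas.pow_const lam)).aestronglyMeasurable
  have hderiv_meas : AEStronglyMeasurable (fun x => p x * ρ x ^ l * log (ρ x)) μ :=
    (hpmeas.mul (hρmeas.pow_const l)).mul (measurable_log.comp hρmeas) |>.aestronglyMeasurable
  have hint_l : Integrable (fun x => p x * ρ x ^ l) μ :=
    hint.norm.mono' (hmeas l) <| .of_forall fun x =>
      norm_mul_rpow_le_mul_one_add_abs_log (hρpos x) (Set.Ioo_subset_Icc_self hl)
  exact (hasDerivAt_integral_of_dominated_loc_of_deriv_le (Ioo_mem_nhds hl.1 hl.2)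
    (F' := fun lam x => p x * ρ x ^ lam * log (ρ x))
    (.of_forall hmeas) hint_l hderiv_meas
    (.of_forall fun x lam hlam =>
      norm_mul_rpow_mul_log_le (hρpos x) (Set.Ioo_subset_Icc_self hlam))
    hint.norm
    (.of_forall fun x lam _ => hasDerivAt_const_mul_rpow (p x) (hρpos x) lam)).2

/-- Differentiability of the normalizing function `Z(λ) = ∫ p ρ^λ dμ` of the
log-homotopy, with derivative obtained by differentiating under the integral sign. -/
theorem hasDerivAt_homotopy_normalizer
    {d : ℕ} (μ : Measure (Fin d → ℝ)) [SigmaFinite μ]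
    (p ρ : (Fin d → ℝ) → ℝ)
    (hpmeas : Measurable p) (hpnn : ∀ x, 0 ≤ p x)
    (hρmeas : Measurable ρ) (hρpos : ∀ x, 0 < ρ x)
    (a b : ℝ) (hab : a < b)
    (hint : Integrable
      (fun x => p x * (ρ x ^ a + ρ x ^ b) * (1 + |Real.log (ρ x)|)) μ) :
    ∀ l ∈ Set.Ioo a b,
      HasDerivAt (fun lam : ℝ => ∫ x, p x * ρ x ^ lam ∂μ)
        (∫ x, p x * ρ x ^ l * Real.log (ρ x) ∂μ) l :=
  hasDerivAt_homotopy_normalizer_general μ p ρ hpmeas hρmeas hρpos a b hint
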